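/- arXiv:math/0611691 — 2 statements merged into one kernel-verified Lean document; each statement's English description precedes it below -/
import Mathlib

section
/- Let C ≥ 2 be an integer and let λ_1 > λ_2 > ... > λ_{C-1} > 0 be given constants. Let ν = (ν_1, ..., ν_{C-1}) ∈ ℝ^{C-1} be such that ν_q > 0 for at least one index q ∈ {1, ..., C-1}. Then there exist vectors p_1 = (p_{11}, ..., p_{1C}) and p_2 = (p_{21}, ..., p_{2C}) with all entries strictly positive, Σ_{j=1}^C p_{1j} = 1 and Σ_{j=1}^C p_{2j} = 1, such that ν_j = log(p_{1j} p_{2C} / (p_{1C} p_{2j})) for every j = 1, ..., C-1, and Δ_r(p_1, p_2) ≥ 0 for every r = 1, ..., C-1. (Existence part of Lemma 2.1.) -/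
/-!
Write `p₂` as the normalisation of a weight vector `u` and `p₁` as the normalisation of its
exponential tilt, `u j ↦ exp (ν j) * u j` for `j < C`; the odds ratios of such a pair are
`exp ν` whatever `u` is. Take `u` equal to `1` at `q` and `C` and to `t` elsewhere. At `t = 0`
the two vectors differ below `C` only at `q`, where `p₁` has the larger mass because
`exp (ν q) > 1`, and `Δ_r` is a positive multiple of that difference. All `Δ_r` depend
continuously on `t`, so they stay positive for some `t > 0`, where every entry is positive.
-/

/-- `Δ_r(p₁,p₂) = λ_r Σ_{j=1}^r (p₁ⱼ - p₂ⱼ) + Σ_{j=r+1}^{C-1} λⱼ (p₁ⱼ - p₂ⱼ)`. -/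
def Delta (C : ℕ) (lam p1 p2 : ℕ → ℝ) (r : ℕ) : ℝ :=
  lam r * ∑ j ∈ Finset.Icc 1 r, (p1 j - p2 j)
    + ∑ j ∈ Finset.Icc (r + 1) (C - 1), lam j * (p1 j - p2 j)

open Filter Topology Finset

theorem Delta_eq_sum_max {C r : ℕ} (hr : r ≤ C - 1) (lam p1 p2 : ℕ → ℝ) :
    Delta C lam p1 p2 r = ∑ j ∈ Icc 1 (C - 1), lam (max r j) * (p1 j - p2 j) := by
  have hIcc : ∀ k : ℕ, Icc 1 k = Ioc 0 k := fun k => Icc_add_one_left_eq_Ioc 0 k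
  rw [Delta, mul_sum, Icc_add_one_left_eq_Ioc, hIcc, hIcc,
    ← sum_Ioc_consecutive _ (Nat.zero_le r) hr]
  congr 1
  · refine sum_congr rfl fun j hj => ?_
    rw [max_eq_left (mem_Icc.1 hj).2]
  · refine sum_congr rfl fun j hj => ?_
    rw [max_eq_right (mem_Ioc.1 hj).1.le]

theorem exists_pos_forall_pos_of_continuousAt {ι : Type*} {s : Finset ι} {F : ι → ℝ → ℝ}
    (hF : ∀ i ∈ s, ContinuousAt (F i) 0) (h0 : ∀ i ∈ s, 0 < F i 0) :
    ∃ t > 0, ∀ i ∈ s, 0 < F i t := by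
  have h : ∀ᶠ t in 𝓝[>] 0, 0 < t ∧ ∀ i ∈ s, 0 < F i t :=
    eventually_mem_nhdsWithin.and <| (eventually_all_finset s).2 fun i hi =>
      ((hF i hi).eventually_const_lt (h0 i hi)).filter_mono nhdsWithin_le_nhds
  exact h.exists

theorem continuousAt_Delta {p1 p2 : ℝ → ℕ → ℝ} {t₀ : ℝ}
    (h1 : ∀ j, ContinuousAt (fun t => p1 t j) t₀) (h2 : ∀ j, ContinuousAt (fun t => p2 t j) t₀)
    (C : ℕ) (lam : ℕ → ℝ) (r : ℕ) :
    ContinuousAt (fun t => Delta C lam (p1 t) (p2 t) r) t₀ := by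
  unfold Delta
  refine (continuousAt_const.mul (tendsto_finsetSum _ fun j _ => (h1 j).sub (h2 j))).add
    (tendsto_finsetSum _ fun j _ => continuousAt_const.mul ((h1 j).sub (h2 j)))

noncomputable def probNormalize (C : ℕ) (u : ℕ → ℝ) (j : ℕ) : ℝ :=
  u j / ∑ i ∈ Icc 1 C, u i

section probNormalize

variable {C : ℕ} {u u' : ℕ → ℝ}

theorem sum_probNormalize (hu : ∑ i ∈ Icc 1 C, u i ≠ 0) :
    ∑ j ∈ Icc 1 C, probNormalize C u j = 1 := by
  simp only [probNormalize, ← sum_div, div_self hu]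

theorem probNormalize_pos (hu : ∀ i ∈ Icc 1 C, 0 < u i) {j : ℕ} (hj : j ∈ Icc 1 C) :
    0 < probNormalize C u j :=
  div_pos (hu j hj) (sum_pos hu ⟨j, hj⟩)

theorem probNormalize_oddsRatio (hu : ∑ i ∈ Icc 1 C, u i ≠ 0) (hu' : ∑ i ∈ Icc 1 C, u' i ≠ 0)
    (j k : ℕ) :
    probNormalize C u j * probNormalize C u' k / (probNormalize C u k * probNormalize C u' j)
      = u j * u' k / (u k * u' j) := by
  simp only [probNormalize, div_mul_div_comm]
  exact div_div_div_cancel_right₀ (mul_ne_zero hu hu') _ _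

theorem continuousAt_probNormalize {u : ℝ → ℕ → ℝ} {t₀ : ℝ}
    (hu : ∀ j, ContinuousAt (fun t => u t j) t₀) (h0 : ∑ i ∈ Icc 1 C, u t₀ i ≠ 0) (j : ℕ) :
    ContinuousAt (fun t => probNormalize C (u t) j) t₀ :=
  (hu j).div (tendsto_finsetSum _ fun i _ => hu i) h0

end probNormalize

theorem sum_Icc_eq_add_of_eq_zero {C q : ℕ} (hq : q ∈ Icc 1 (C - 1)) {f : ℕ → ℝ}
    (hf : ∀ i, i ≠ q → i ≠ C → f i = 0) : ∑ i ∈ Icc 1 C, f i = f q + f C := by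
  rw [mem_Icc] at hq
  exact sum_eq_add q C (by omega) (fun i _ hi => hf i hi.1 hi.2)
    (fun h => absurd (mem_Icc.2 (by omega)) h) (fun h => absurd (mem_Icc.2 (by omega)) h)

noncomputable def expTilt (C : ℕ) (ν u : ℕ → ℝ) (j : ℕ) : ℝ :=
  if j = C then u j else Real.exp (ν j) * u j

section expTilt

variable {C : ℕ} {ν u : ℕ → ℝ} {j : ℕ}

theorem expTilt_pos (hu : 0 < u j) : 0 < expTilt C ν u j := by
  unfold expTilt; split_ifs <;> positivity

theorem expTilt_of_eq_zero (hu : u j = 0) : expTilt C ν u j = 0 := by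
  simp [expTilt, hu]

theorem expTilt_oddsRatio (hj : j ≠ C) (huj : u j ≠ 0) (huC : u C ≠ 0) :
    expTilt C ν u j * u C / (expTilt C ν u C * u j) = Real.exp (ν j) := by
  simp only [expTilt, if_neg hj, ↓reduceIte]
  field_simp

theorem continuous_expTilt {u : ℝ → ℕ → ℝ} (hu : Continuous fun t => u t j) :
    Continuous fun t => expTilt C ν (u t) j := by
  unfold expTilt; split_ifs <;> fun_prop

end expTilt

def perturbedTwoPoint (C q : ℕ) (t : ℝ) (j : ℕ) : ℝ :=
  if j = q ∨ j = C then 1 else t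

section perturbedTwoPoint

variable {C q : ℕ}

theorem perturbedTwoPoint_pos {t : ℝ} (ht : 0 < t) (j : ℕ) : 0 < perturbedTwoPoint C q t j := by
  unfold perturbedTwoPoint; split_ifs <;> positivity

theorem continuous_perturbedTwoPoint (j : ℕ) : Continuous fun t => perturbedTwoPoint C q t j := by
  unfold perturbedTwoPoint; split_ifs <;> fun_prop

theorem perturbedTwoPoint_zero_of_ne {i : ℕ} (hiq : i ≠ q) (hiC : i ≠ C) :
    perturbedTwoPoint C q 0 i = 0 := by
  simp [perturbedTwoPoint, hiq, hiC]

theorem sum_perturbedTwoPoint_zero (hq : q ∈ Icc 1 (C - 1)) :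
    ∑ i ∈ Icc 1 C, perturbedTwoPoint C q 0 i = 2 := by
  rw [sum_Icc_eq_add_of_eq_zero hq fun i => perturbedTwoPoint_zero_of_ne]
  norm_num [perturbedTwoPoint]

theorem sum_expTilt_perturbedTwoPoint_zero (ν : ℕ → ℝ) (hq : q ∈ Icc 1 (C - 1)) :
    ∑ i ∈ Icc 1 C, expTilt C ν (perturbedTwoPoint C q 0) i = Real.exp (ν q) + 1 := by
  rw [sum_Icc_eq_add_of_eq_zero hq fun i hiq hiC =>
    expTilt_of_eq_zero (perturbedTwoPoint_zero_of_ne hiq hiC)]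
  have hqC : q ≠ C := by grind
  simp [expTilt, perturbedTwoPoint, hqC]

end perturbedTwoPoint

section construction

variable {C q : ℕ} {ν lam : ℕ → ℝ}

theorem Delta_expTilt_perturbedTwoPoint_zero_pos (hq : q ∈ Icc 1 (C - 1)) (hνq : 0 < ν q)
    (hlam : ∀ k ∈ Icc 1 (C - 1), 0 < lam k) {r : ℕ} (hr : r ∈ Icc 1 (C - 1)) :
    0 < Delta C lam (probNormalize C (expTilt C ν (perturbedTwoPoint C q 0)))
      (probNormalize C (perturbedTwoPoint C q 0)) r := by
  have hqC : q ≠ C := by grind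
  rw [Delta_eq_sum_max (mem_Icc.1 hr).2, sum_eq_single q]
  · have hmax : max r q ∈ Icc 1 (C - 1) := by grind
    have h1 : expTilt C ν (perturbedTwoPoint C q 0) q = Real.exp (ν q) := by
      simp [expTilt, perturbedTwoPoint, hqC]
    have h2 : perturbedTwoPoint C q 0 q = 1 := by simp [perturbedTwoPoint]
    have hexp : 1 < Real.exp (ν q) := Real.one_lt_exp_iff.2 hνq
    rw [probNormalize, probNormalize, sum_perturbedTwoPoint_zero hq,
      sum_expTilt_perturbedTwoPoint_zero ν hq, h1, h2]
    refine mul_pos (hlam _ hmax) (sub_pos.2 ?_)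
    rw [div_lt_div_iff₀ two_pos (by positivity)]
    linarith
  · intro j hj hjq
    have hjC : j ≠ C := by grind
    simp [probNormalize, expTilt_of_eq_zero, perturbedTwoPoint_zero_of_ne hjq hjC]
  · exact fun h => absurd hq h

theorem exists_pos_forall_Delta_pos (hq : q ∈ Icc 1 (C - 1)) (hνq : 0 < ν q)
    (hlam : ∀ k ∈ Icc 1 (C - 1), 0 < lam k) :
    ∃ t > 0, ∀ r ∈ Icc 1 (C - 1),
      0 < Delta C lam (probNormalize C (expTilt C ν (perturbedTwoPoint C q t)))
        (probNormalize C (perturbedTwoPoint C q t)) r := by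
  have hcont2 := continuous_perturbedTwoPoint (C := C) (q := q)
  have hcont1 : ∀ j, Continuous fun t => expTilt C ν (perturbedTwoPoint C q t) j :=
    fun j => continuous_expTilt (hcont2 j)
  have hcontΔ : ∀ r, ContinuousAt (fun t => Delta C lam
      (probNormalize C (expTilt C ν (perturbedTwoPoint C q t)))
      (probNormalize C (perturbedTwoPoint C q t)) r) 0 := by
    refine continuousAt_Delta
      (fun j => continuousAt_probNormalize (fun i => (hcont1 i).continuousAt) ?_ j)
      (fun j => continuousAt_probNormalize (fun i => (hcont2 i).continuousAt) ?_ j) C lam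
    · rw [sum_expTilt_perturbedTwoPoint_zero ν hq]; positivity
    · rw [sum_perturbedTwoPoint_zero hq]; norm_num
  exact exists_pos_forall_pos_of_continuousAt (fun r _ => hcontΔ r)
    fun r hr => Delta_expTilt_perturbedTwoPoint_zero_pos hq hνq hlam hr

end construction

theorem lemma21_existence_general (C : ℕ) (lam : ℕ → ℝ)
    (hanti : StrictAntiOn lam (Set.Icc 1 (C - 1))) (hpos : 0 < lam (C - 1))
    (ν : ℕ → ℝ) (hq : ∃ q ∈ Finset.Icc 1 (C - 1), 0 < ν q) :
    ∃ p1 p2 : ℕ → ℝ,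
      (∀ j ∈ Finset.Icc 1 C, 0 < p1 j) ∧
      (∀ j ∈ Finset.Icc 1 C, 0 < p2 j) ∧
      (∑ j ∈ Finset.Icc 1 C, p1 j = 1) ∧
      (∑ j ∈ Finset.Icc 1 C, p2 j = 1) ∧
      (∀ j ∈ Finset.Icc 1 (C - 1),
        ν j = Real.log (p1 j * p2 C / (p1 C * p2 j))) ∧
      (∀ r ∈ Finset.Icc 1 (C - 1), 0 ≤ Delta C lam p1 p2 r) := by
  obtain ⟨q, hq, hνq⟩ := hq
  have hlam : ∀ k ∈ Icc 1 (C - 1), 0 < lam k := fun k hk => by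
    obtain ⟨hk1, hkC⟩ := mem_Icc.1 hk
    exact hpos.trans_le (hanti.antitoneOn ⟨hk1, hkC⟩ ⟨hk1.trans hkC, le_rfl⟩ hkC)
  obtain ⟨t, ht, hΔ⟩ := exists_pos_forall_Delta_pos hq hνq hlam
  set u2 := perturbedTwoPoint C q t
  set u1 := expTilt C ν u2
  have hu2 : ∀ j ∈ Icc 1 C, 0 < u2 j := fun j _ => perturbedTwoPoint_pos ht j
  have hu1 : ∀ j ∈ Icc 1 C, 0 < u1 j := fun j _ => expTilt_pos (perturbedTwoPoint_pos ht j)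
  have hCmem : C ∈ Icc 1 C := by grind
  have hs1 := (sum_pos hu1 ⟨C, hCmem⟩).ne'
  have hs2 := (sum_pos hu2 ⟨C, hCmem⟩).ne'
  refine ⟨probNormalize C u1, probNormalize C u2, fun _ => probNormalize_pos hu1,
    fun _ => probNormalize_pos hu2, sum_probNormalize hs1, sum_probNormalize hs2,
    fun j hj => ?_, fun r hr => (hΔ r hr).le⟩
  have hjC : j ≠ C := by grind
  rw [probNormalize_oddsRatio hs1 hs2, expTilt_oddsRatio hjC (perturbedTwoPoint_pos ht j).ne'
    (perturbedTwoPoint_pos ht C).ne', Real.log_exp]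

/-- Existence part of Lemma 2.1: if some `ν_q > 0`, there are positive probability
vectors `p₁, p₂` realizing the log odds ratios `ν` and satisfying all ICX
inequalities `Δ_r ≥ 0`. -/
theorem lemma21_existence (C : ℕ) (hC : 2 ≤ C) (lam : ℕ → ℝ)
    (hanti : StrictAntiOn lam (Set.Icc 1 (C - 1))) (hpos : 0 < lam (C - 1))
    (ν : ℕ → ℝ) (hq : ∃ q ∈ Finset.Icc 1 (C - 1), 0 < ν q) :
    ∃ p1 p2 : ℕ → ℝ,
      (∀ j ∈ Finset.Icc 1 C, 0 < p1 j) ∧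
      (∀ j ∈ Finset.Icc 1 C, 0 < p2 j) ∧
      (∑ j ∈ Finset.Icc 1 C, p1 j = 1) ∧
      (∑ j ∈ Finset.Icc 1 C, p2 j = 1) ∧
      (∀ j ∈ Finset.Icc 1 (C - 1),
        ν j = Real.log (p1 j * p2 C / (p1 C * p2 j))) ∧
      (∀ r ∈ Finset.Icc 1 (C - 1), 0 ≤ Delta C lam p1 p2 r) :=
  lemma21_existence_general C lam hanti hpos ν hq
end

section
/- Let C ≥ 2 be an integer and let λ_1 > λ_2 > ... > λ_{C-1} > 0 be given constants. Let p_1 and p_2 be probability vectors on C categories with all entries strictly positive, and suppose the log odds ratios satisfy ν_j = log(p_{1j} p_{2C} / (p_{1C} p_{2j})) < 0 for every j = 1, ..., C-1. Then it is not the case that Δ_r(p_1, p_2) ≥ 0 for all r = 1, ..., C-1; that is, no pair of positive probability vectors whose log odds ratios are all strictly negative can satisfy the ICX inequalities. (Nonexistence part of Lemma 2.1.) -/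
open Finset

theorem Delta_pred_self (C : ℕ) (lam p1 p2 : ℕ → ℝ) :
    Delta C lam p1 p2 (C - 1) = lam (C - 1) * ∑ j ∈ Icc 1 (C - 1), (p1 j - p2 j) := by
  rw [Delta, Icc_eq_empty_of_lt (Nat.lt_succ_self _), sum_empty, add_zero]

theorem sum_Icc_one_eq_sum_Icc_one_pred_add {C : ℕ} (hC : 1 ≤ C) (p : ℕ → ℝ) :
    ∑ j ∈ Icc 1 C, p j = ∑ j ∈ Icc 1 (C - 1), p j + p C := by
  obtain ⟨D, rfl⟩ := Nat.exists_eq_add_of_le' hC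
  exact sum_Icc_succ_top (by omega) p

theorem Real.lt_of_log_div_neg {a b : ℝ} (hb : 0 < b) (h : Real.log (a / b) < 0) : a < b := by
  by_contra! hba
  exact h.not_ge (Real.log_nonneg ((one_le_div hb).mpr hba))

theorem lt_of_forall_mul_lt_mul {ι : Type*} {s : Finset ι} (hs : s.Nonempty) {a b : ι → ℝ}
    {x y : ℝ} (h : ∀ j ∈ s, a j * y < x * b j)
    (ha : ∑ j ∈ s, a j + x = 1) (hb : ∑ j ∈ s, b j + y = 1) : y < x := by
  have hsum : (∑ j ∈ s, a j) * y < x * ∑ j ∈ s, b j := by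
    rw [sum_mul, mul_sum]
    exact sum_lt_sum_of_nonempty hs h
  rw [eq_sub_of_add_eq ha, eq_sub_of_add_eq hb] at hsum
  linarith

theorem lemma21_nonexistence_general (C : ℕ) (hC : 2 ≤ C) (lam : ℕ → ℝ)
    (hpos : 0 < lam (C - 1))
    (p1 p2 : ℕ → ℝ)
    (hp1pos : ∀ j ∈ Finset.Icc 1 C, 0 < p1 j)
    (hp2pos : ∀ j ∈ Finset.Icc 1 C, 0 < p2 j)
    (hp1sum : ∑ j ∈ Finset.Icc 1 C, p1 j = 1)
    (hp2sum : ∑ j ∈ Finset.Icc 1 C, p2 j = 1)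
    (hν : ∀ j ∈ Finset.Icc 1 (C - 1),
      Real.log (p1 j * p2 C / (p1 C * p2 j)) < 0) :
    ¬ (∀ r ∈ Finset.Icc 1 (C - 1), 0 ≤ Delta C lam p1 p2 r) := by
  intro hΔ
  have hC1 : 1 ≤ C - 1 := by omega
  rw [sum_Icc_one_eq_sum_Icc_one_pred_add (by omega)] at hp1sum hp2sum
  have hlast_lt : p2 C < p1 C := by
    refine lt_of_forall_mul_lt_mul (nonempty_Icc.mpr hC1) (fun j hj => ?_) hp1sum hp2sum
    have hp1C := hp1pos C (right_mem_Icc.mpr (by omega))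
    have hp2j := hp2pos j (Icc_subset_Icc_right (by omega) hj)
    exact Real.lt_of_log_div_neg (by positivity) (hν j hj)
  have hΔlast := hΔ (C - 1) (right_mem_Icc.mpr hC1)
  rw [Delta_pred_self, sum_sub_distrib] at hΔlast
  have := nonneg_of_mul_nonneg_right hΔlast hpos
  linarith

/-- Nonexistence part of Lemma 2.1: if all the log odds ratios are strictly
negative, the ICX inequalities `Δ_r ≥ 0` cannot all hold. -/
theorem lemma21_nonexistence (C : ℕ) (hC : 2 ≤ C) (lam : ℕ → ℝ)
    (hanti : StrictAntiOn lam (Set.Icc 1 (C - 1))) (hpos : 0 < lam (C - 1))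
    (p1 p2 : ℕ → ℝ)
    (hp1pos : ∀ j ∈ Finset.Icc 1 C, 0 < p1 j)
    (hp2pos : ∀ j ∈ Finset.Icc 1 C, 0 < p2 j)
    (hp1sum : ∑ j ∈ Finset.Icc 1 C, p1 j = 1)
    (hp2sum : ∑ j ∈ Finset.Icc 1 C, p2 j = 1)
    (hν : ∀ j ∈ Finset.Icc 1 (C - 1),
      Real.log (p1 j * p2 C / (p1 C * p2 j)) < 0) :
    ¬ (∀ r ∈ Finset.Icc 1 (C - 1), 0 ≤ Delta C lam p1 p2 r) :=
  lemma21_nonexistence_general C hC lam hpos p1 p2 hp1pos hp2pos hp1sum hp2sum hν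
end
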